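/- arXiv:2112.11265 — 7 statements merged into one kernel-verified Lean document; each statement's English description precedes it below -/
import Mathlib

section
/- Let (τ^n)_{n∈ℕ} be a sequence of nondecreasing functions τ^n : [0,∞) → [0,∞) with τ^n(t) ≤ t for all t ≥ 0, satisfying: τ^n([0,t]) ⊆ τ^{n+1}([0,t]) for all n and t, and the closure of ∪_{n∈ℕ} τ^n([0,t]) equals [0,t] for every t ≥ 0. Then for every t > 0, sup_{0 ≤ s ≤ t} |s − τ^n(s)| → 0 as n → ∞, i.e. τ^n converges to the identity uniformly on compact subsets of [0,∞). -/
open Filter Topology Set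

/-!
Density of the refining images gives, for each `s`, a value `τ N v` (with `v ≤ s`) close to `s`;
it stays in the image of `[0, s]` under every later `τ n`, so monotonicity of `τ n` gives the
pointwise bound `s - ε < τ n s` eventually. As in Pólya's theorem, monotonicity then upgrades
these bounds at the finitely many points of an `ε`-grid to a uniform bound on a compact interval.
-/

theorem eventually_sub_lt_of_mem_closure_iUnion_image {f : ℕ → ℝ → ℝ} {a s ε : ℝ} (hε : 0 < ε)
    (hf : ∀ n, MonotoneOn (f n) (Icc a s)) (himg : Monotone fun n => f n '' Icc a s)
    (hs : s ∈ closure (⋃ n, f n '' Icc a s)) : ∀ᶠ n in atTop, s - ε < f n s := by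
  obtain ⟨y, hy, hsy⟩ := Metric.mem_closure_iff.1 hs ε hε
  obtain ⟨N, hyN⟩ := mem_iUnion.1 hy
  filter_upwards [eventually_ge_atTop N] with n hn
  obtain ⟨v, hv, rfl⟩ := himg hn hyN
  have hvs : f n v ≤ f n s := hf n hv ⟨hv.1.trans hv.2, le_rfl⟩ hv.2
  rw [Real.dist_eq] at hsy
  linarith [(abs_lt.1 hsy).2]

theorem eventually_forall_Icc_sub_lt_of_monotoneOn {ι : Type*} {l : Filter ι} {f : ι → ℝ → ℝ}
    {a b ε : ℝ} (hε : 0 < ε) (hf : ∀ i, MonotoneOn (f i) (Icc a b))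
    (hconv : ∀ s ∈ Icc a b, ∀ᶠ i in l, s - ε < f i s) :
    ∀ᶠ i in l, ∀ s ∈ Icc a b, s - 2 * ε < f i s := by
  rcases lt_or_ge b a with hba | hab
  · exact .of_forall fun i s hs => (not_le.2 hba (hs.1.trans hs.2)).elim
  set grid : ℕ → ℝ := fun j => a + j * ε
  set k := ⌊(b - a) / ε⌋₊
  have hgrid_mem : ∀ j ≤ k, grid j ∈ Icc a b := fun j hj => by
    have : (j : ℝ) ≤ (b - a) / ε := (Nat.cast_le.2 hj).trans (Nat.floor_le (div_nonneg (sub_nonneg.2 hab) hε.le))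
    constructor
    · simp only [grid]; exact le_add_of_nonneg_right (by positivity)
    · simp only [grid]; linarith [(le_div_iff₀ hε).1 this]
  have hgrid : ∀ᶠ i in l, ∀ j ∈ Finset.range (k + 1), grid j - ε < f i (grid j) :=
    (eventually_all_finset _).2 fun j hj =>
      hconv _ (hgrid_mem j (Nat.lt_succ_iff.1 (Finset.mem_range.1 hj)))
  filter_upwards [hgrid] with i hi s hs
  set j := ⌊(s - a) / ε⌋₊
  have hjk : j ≤ k := Nat.floor_le_floor (div_le_div_of_nonneg_right (sub_le_sub_right hs.2 a) hε.le)
  have hj_le : grid j ≤ s := by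
    have := (le_div_iff₀ hε).1 (Nat.floor_le (div_nonneg (sub_nonneg.2 hs.1) hε.le))
    simp only [grid]; linarith
  have hs_lt : s < grid j + ε := by
    have := (div_lt_iff₀ hε).1 (Nat.lt_floor_add_one ((s - a) / ε))
    simp only [grid]; linarith
  have hgrid_j := hi j (Finset.mem_range.2 (Nat.lt_succ_of_le hjk))
  have hmono_j : f i (grid j) ≤ f i s := hf i (hgrid_mem j hjk) hs hj_le
  linarith

theorem tendstoUniformlyOn_id_of_monotoneOn {ι : Type*} {l : Filter ι} {f : ι → ℝ → ℝ}
    {a b : ℝ} (hf : ∀ i, MonotoneOn (f i) (Icc a b)) (hle : ∀ i, ∀ s ∈ Icc a b, f i s ≤ s)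
    (hconv : ∀ s ∈ Icc a b, ∀ ε > 0, ∀ᶠ i in l, s - ε < f i s) :
    TendstoUniformlyOn f id l (Icc a b) := by
  refine Metric.tendstoUniformlyOn_iff.2 fun ε hε => ?_
  filter_upwards [eventually_forall_Icc_sub_lt_of_monotoneOn (half_pos hε) hf
    fun s hs => hconv s hs _ (half_pos hε)] with i hi s hs
  rw [id, Real.dist_eq, abs_of_nonneg (sub_nonneg.2 (hle i s hs))]
  linarith [hi s hs]

theorem tendsto_iSup_dist_of_tendstoUniformlyOn {ι α β : Type*} [PseudoMetricSpace β]
    {l : Filter ι} {F : ι → α → β} {f : α → β} {K : Set α} (h : TendstoUniformlyOn F f l K) :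
    Tendsto (fun i => ⨆ x : K, dist (f x) (F i x)) l (𝓝 0) := by
  refine tendsto_order.2 ⟨fun a ha => .of_forall fun i =>
    ha.trans_le (Real.iSup_nonneg fun _ => dist_nonneg), fun a ha => ?_⟩
  filter_upwards [Metric.tendstoUniformlyOn_iff.1 h (a / 2) (half_pos ha)] with i hi
  exact (Real.iSup_le (fun x : K => (hi x x.2).le) (half_pos ha).le).trans_lt (half_lt_self ha)

theorem delays_refining_tendstoUniformly_id_general
    (τ : ℕ → ℝ → ℝ)
    (hmono : ∀ n, ∀ s t, 0 ≤ s → s ≤ t → τ n s ≤ τ n t)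
    (hle : ∀ n t, 0 ≤ t → τ n t ≤ t)
    (href : ∀ n t, 0 ≤ t → τ n '' Icc 0 t ⊆ τ (n + 1) '' Icc 0 t)
    (hdense : ∀ t, 0 ≤ t → closure (⋃ n, τ n '' Icc 0 t) = Icc 0 t) :
    ∀ t, 0 < t →
      Tendsto (fun n => ⨆ s : Icc (0 : ℝ) t, |(s : ℝ) - τ n s|) atTop (𝓝 0) := by
  intro t _
  have hmonoOn : ∀ n u, MonotoneOn (τ n) (Icc 0 u) := fun n u x hx y _ hxy => hmono n x y hx.1 hxy
  have hconv : ∀ s ∈ Icc 0 t, ∀ ε > 0, ∀ᶠ n in atTop, s - ε < τ n s := fun s hs ε hε =>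
    eventually_sub_lt_of_mem_closure_iUnion_image hε (fun n => hmonoOn n s)
      (monotone_nat_of_le_succ fun n => href n s hs.1)
      (by rw [hdense s hs.1]; exact right_mem_Icc.2 hs.1)
  have hunif : TendstoUniformlyOn τ id atTop (Icc 0 t) :=
    tendstoUniformlyOn_id_of_monotoneOn (fun n => hmonoOn n t) (fun n s hs => hle n s hs.1) hconv
  simpa only [id, Real.dist_eq] using tendsto_iSup_dist_of_tendstoUniformlyOn hunif

/-- Proposition 3.1(a). A refining sequence of delays that increases to
identity converges to the identity uniformly on compact intervals: for every `t > 0`,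
`sup_{0 ≤ s ≤ t} |s - τ n s| → 0` as `n → ∞`. -/
theorem delays_refining_tendstoUniformly_id
    (τ : ℕ → ℝ → ℝ)
    (hpos : ∀ n s, 0 ≤ s → 0 ≤ τ n s)
    (hmono : ∀ n, ∀ s t, 0 ≤ s → s ≤ t → τ n s ≤ τ n t)
    (hle : ∀ n t, 0 ≤ t → τ n t ≤ t)
    (href : ∀ n t, 0 ≤ t → τ n '' Icc 0 t ⊆ τ (n + 1) '' Icc 0 t)
    (hdense : ∀ t, 0 ≤ t → closure (⋃ n, τ n '' Icc 0 t) = Icc 0 t) :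
    ∀ t, 0 < t →
      Tendsto (fun n => ⨆ s : Icc (0 : ℝ) t, |(s : ℝ) - τ n s|) atTop (𝓝 0) :=
  delays_refining_tendstoUniformly_id_general τ hmono hle href hdense
end

section
/- Let f : [0,∞) → ℝ be right-continuous with left limits (càdlàg), and let (τ^n)_{n∈ℕ} be nondecreasing functions τ^n : [0,∞) → [0,∞) with τ^n(s) ≤ s for all s, such that sup_{0 ≤ s ≤ t'} |s − τ^n(s)| → 0 as n → ∞ for every t' > 0. Then for every t > 0 the left limit (f∘τ^n)(t−) = lim_{s↑t, s<t} f(τ^n(s)) exists for every n, and (f∘τ^n)(t−) → f(t−) as n → ∞, where f(t−) = lim_{s↑t, s<t} f(s). -/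
/-!
The delayed path `f ∘ τ n` has a left limit at `t` because the monotone delay `τ n` approaches
`c = sup τ n` on `(0, t)` from the left: either `τ n` is eventually equal to `c`, and the limit is
`f c`, or it stays strictly below `c`, and the limit is `f (c-)`. Either way that limit lies in the
closure of `f '' (a, t)` as soon as `τ n` exceeds `a` somewhere below `t`, which by the locally
uniform convergence holds for all large `n`; so the limits converge to `f (t-)`.
-/

open Filter Topology Set

theorem MonotoneOn.exists_tendsto_comp_nhdsLT {α β E : Type*} [LinearOrder α]
    [TopologicalSpace α] [OrderTopology α] [ConditionallyCompleteLinearOrder β]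
    [TopologicalSpace β] [OrderTopology β] [TopologicalSpace E] {g : α → β} {f : β → E}
    {x y : α} {a : β} (h_nonempty : (Ioo y x).Nonempty) (Mg : MonotoneOn g (Ioo y x))
    (h_bdd : BddAbove (g '' Ioo y x)) (hga : ∀ s ∈ Ioo y x, a ≤ g s)
    (hf : ∀ c, a < c → ∃ L, Tendsto f (𝓝[<] c) (𝓝 L)) :
    ∃ L, Tendsto (f ∘ g) (𝓝[<] x) (𝓝 L) := by
  set c := sSup (g '' Ioo y x)
  by_cases hc : c ∈ g '' Ioo y x
  · obtain ⟨z, hz, hzc⟩ := hc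
    refine ⟨f c, tendsto_const_nhds.congr' ?_⟩
    filter_upwards [Ioo_mem_nhdsLT hz.2] with s hs
    have hs' : s ∈ Ioo y x := ⟨hz.1.trans hs.1, hs.2⟩
    have : g s = c :=
      le_antisymm (le_csSup h_bdd (mem_image_of_mem g hs')) (hzc ▸ Mg hz hs' hs.1.le)
    simp [this]
  · have hlt : ∀ s ∈ Ioo y x, g s < c := fun s hs =>
      (le_csSup h_bdd (mem_image_of_mem g hs)).lt_of_ne fun h => hc ⟨s, hs, h⟩
    obtain ⟨s, hs⟩ := h_nonempty
    obtain ⟨L, hL⟩ := hf c ((hga s hs).trans_lt (hlt s hs))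
    refine ⟨L, hL.comp (tendsto_nhdsWithin_of_tendsto_nhds_of_eventually_within _
      (Mg.tendsto_nhdsWithin_Ioo_left ⟨s, hs⟩ h_bdd) ?_)⟩
    filter_upwards [Ioo_mem_nhdsLT (hs.1.trans hs.2)] using hlt

theorem tendsto_of_eventually_mem_closure_image {ι α X : Type*} [TopologicalSpace X]
    [RegularSpace X] {l : Filter ι} {F : Filter α} {f : α → X} {L : ι → X} {M : X}
    (hf : Tendsto f F (𝓝 M)) (hL : ∀ S ∈ F, ∀ᶠ n in l, L n ∈ closure (f '' S)) :
    Tendsto L l (𝓝 M) :=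
  (closed_nhds_basis M).tendsto_right_iff.2 fun V ⟨hV, hVc⟩ =>
    (hL _ (hf hV)).mono fun _ hn => hVc.closure_subset_iff.2 (image_preimage_subset f V) hn

theorem tendsto_apply_of_tendsto_ciSup_dist {ι T X : Type*} [PseudoMetricSpace X]
    {l : Filter ι} {φ : T → X} {ψ : ι → T → X}
    (hbdd : ∀ n, BddAbove (range fun x => dist (φ x) (ψ n x)))
    (hsup : Tendsto (fun n => ⨆ x, dist (φ x) (ψ n x)) l (𝓝 0)) (x : T) :
    Tendsto (fun n => ψ n x) l (𝓝 (φ x)) :=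
  tendsto_iff_dist_tendsto_zero.2 <| by
    simp_rw [dist_comm (ψ _ x)]
    exact tendsto_of_tendsto_of_tendsto_of_le_of_le tendsto_const_nhds hsup
      (fun _ => dist_nonneg) fun n => le_ciSup (hbdd n) x

theorem delayed_path_leftLim_tendsto_general
    (f : ℝ → ℝ)
    (hll : ∀ t, 0 < t → ∃ L, Tendsto f (𝓝[<] t) (𝓝 L))
    (τ : ℕ → ℝ → ℝ)
    (hpos : ∀ n s, 0 ≤ s → 0 ≤ τ n s)
    (hmono : ∀ n, ∀ s t, 0 ≤ s → s ≤ t → τ n s ≤ τ n t)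
    (hle : ∀ n s, 0 ≤ s → τ n s ≤ s)
    (hunif : ∀ t', 0 < t' →
      Tendsto (fun n => ⨆ s : Icc (0 : ℝ) t', |(s : ℝ) - τ n s|) atTop (𝓝 0)) :
    ∀ t, 0 < t → ∀ M, Tendsto f (𝓝[<] t) (𝓝 M) →
      ∃ L : ℕ → ℝ,
        (∀ n, Tendsto (f ∘ τ n) (𝓝[<] t) (𝓝 (L n))) ∧ Tendsto L atTop (𝓝 M) := by
  intro t ht M hM
  have hlim (n : ℕ) : ∃ L, Tendsto (f ∘ τ n) (𝓝[<] t) (𝓝 L) :=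
    MonotoneOn.exists_tendsto_comp_nhdsLT (nonempty_Ioo.2 ht)
      (fun s hs u _ hsu => hmono n s u hs.1.le hsu)
      ⟨t, forall_mem_image.2 fun s hs => (hle n s hs.1.le).trans hs.2.le⟩
      (fun s hs => hpos n s hs.1.le) hll
  choose L hL using hlim
  refine ⟨L, hL, tendsto_of_eventually_mem_closure_image hM fun S hS => ?_⟩
  obtain ⟨a, hat, haS⟩ := mem_nhdsLT_iff_exists_Ioo_subset.1 hS
  obtain ⟨q, hq, hqt⟩ := exists_between (max_lt hat ht)
  obtain ⟨haq, hq0⟩ := max_lt_iff.1 hq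
  have hτq : Tendsto (fun n => τ n q) atTop (𝓝 q) := by
    refine tendsto_apply_of_tendsto_ciSup_dist (φ := ((↑) : Icc (0 : ℝ) t → ℝ))
      (fun n => ⟨t, forall_mem_range.2 fun s => ?_⟩) (by simpa only [Real.dist_eq] using hunif t ht)
      ⟨q, hq0.le, hqt.le⟩
    rw [Real.dist_eq, abs_le]
    constructor <;> linarith [hpos n s s.2.1, hle n s s.2.1, s.2.2]
  filter_upwards [hτq.eventually (lt_mem_nhds haq)] with n hn
  refine closure_mono (image_mono haS) (mem_closure_of_tendsto (hL n) ?_)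
  filter_upwards [Ioo_mem_nhdsLT hqt] with s hs
  exact mem_image_of_mem f ⟨hn.trans_le (hmono n q s hq0.le hs.1.le),
    (hle n s (hq0.trans hs.1).le).trans_lt hs.2⟩

/-- Proposition 3.1(b), pathwise. Let `f` be càdlàg on `[0,∞)` and let
`τ n` be nondecreasing delays (`0 ≤ τ n s ≤ s`) converging to the identity uniformly on
compacts. Then for every `t > 0` the left limits `(f ∘ τ n)(t-)` exist and converge to the
left limit `f(t-)`. -/
theorem delayed_path_leftLim_tendsto
    (f : ℝ → ℝ)
    (hrc : ∀ t, 0 ≤ t → ContinuousWithinAt f (Ici t) t)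
    (hll : ∀ t, 0 < t → ∃ L, Tendsto f (𝓝[<] t) (𝓝 L))
    (τ : ℕ → ℝ → ℝ)
    (hpos : ∀ n s, 0 ≤ s → 0 ≤ τ n s)
    (hmono : ∀ n, ∀ s t, 0 ≤ s → s ≤ t → τ n s ≤ τ n t)
    (hle : ∀ n s, 0 ≤ s → τ n s ≤ s)
    (hunif : ∀ t', 0 < t' →
      Tendsto (fun n => ⨆ s : Icc (0 : ℝ) t', |(s : ℝ) - τ n s|) atTop (𝓝 0)) :
    ∀ t, 0 < t → ∀ M, Tendsto f (𝓝[<] t) (𝓝 M) →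
      ∃ L : ℕ → ℝ,
        (∀ n, Tendsto (f ∘ τ n) (𝓝[<] t) (𝓝 (L n))) ∧ Tendsto L atTop (𝓝 M) :=
  delayed_path_leftLim_tendsto_general f hll τ hpos hmono hle hunif
end

section
/- Let (Ω, 𝒜) be a measurable space and X = (X_1, …, X_m) a family of stochastic processes X_i : Ω × [0,∞) → ℝ with ω ↦ X_i(ω,u) measurable for every u and with right-continuous paths. Let (τ^n)_{n∈ℕ} be a sequence of delays, i.e. each τ^n = (τ^n_1,…,τ^n_m) with τ^n_i : [0,∞) → [0,∞) nondecreasing, right-continuous and τ^n_i(s) ≤ s, satisfying τ^n_i([0,t]) ⊆ τ^{n+1}_i([0,t]) for all n, t, i, and closure(∪_n τ^n_i([0,t])) = [0,t] for all t, i. Fix t > 0 and set 𝒢_n := σ( X_i(·, τ^n_i(s)) : 1 ≤ i ≤ m, 0 ≤ s < t ). Then the sequence (𝒢_n)_{n∈ℕ} is nondecreasing, each 𝒢_n is contained in σ( X_i(·,u) : 1 ≤ i ≤ m, 0 ≤ u < t ), and ⋁_{n∈ℕ} 𝒢_n = σ( X_i(·,u) : 1 ≤ i ≤ m, 0 ≤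 u < t ). -/
open Filter Topology Set MeasureTheory

/-!
Reparametrising the generators, the `n`-th delayed σ-algebra is generated by the observations
at the times `τ n i '' [0, t)`. These sets increase with `n` and lie in `[0, t)`, which gives
the first two claims. For the third, the density of `⋃ n, τ n i '' [0, t)` in `[0, t)` lets us
approach every `u ∈ [0, t)` from the right by delayed times; by right-continuity of the paths,
`X i · u` is then a pointwise limit of functions measurable for `⨆ n, 𝒢 n`, hence measurable
for it.
-/

section GeneratedSigmaAlgebra

variable {Ω ι T E : Type*} [MeasurableSpace E]

lemma iSup_biSup_comap_le_of_image_subset {T₁ T₂ : Type*} (Y : ι → Ω → T → E)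
    {g₁ : ι → T₁ → T} {g₂ : ι → T₂ → T} {S₁ : Set T₁} {S₂ : Set T₂}
    (h : ∀ i, g₁ i '' S₁ ⊆ g₂ i '' S₂) :
    ⨆ i, ⨆ s ∈ S₁, MeasurableSpace.comap (fun ω => Y i ω (g₁ i s)) inferInstance ≤
      ⨆ i, ⨆ s ∈ S₂, MeasurableSpace.comap (fun ω => Y i ω (g₂ i s)) inferInstance := by
  refine iSup_mono fun i => ?_
  let G : T → MeasurableSpace Ω := fun u =>
    MeasurableSpace.comap (fun ω => Y i ω u) inferInstance
  rw [← iSup_image (f := g₁ i) (g := G), ← iSup_image (f := g₂ i) (g := G)]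
  exact biSup_mono (h i)

lemma comap_le_biSup_comap_of_continuousWithinAt [TopologicalSpace T] [FrechetUrysohnSpace T]
    [TopologicalSpace E] [TopologicalSpace.PseudoMetrizableSpace E] [BorelSpace E]
    {Y : Ω → T → E} {D S : Set T} {u : T} (hu : u ∈ closure (D ∩ S))
    (hY : ∀ ω, ContinuousWithinAt (Y ω) S u) :
    MeasurableSpace.comap (fun ω => Y ω u) inferInstance ≤
      ⨆ v ∈ D, MeasurableSpace.comap (fun ω => Y ω v) inferInstance := by
  obtain ⟨v, hvDS, hvu⟩ := mem_closure_iff_seq_limit.mp hu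
  have hvu' : Tendsto v atTop (𝓝[S] u) :=
    tendsto_nhdsWithin_iff.mpr ⟨hvu, .of_forall fun k => (hvDS k).2⟩
  set M := ⨆ w ∈ D, MeasurableSpace.comap (fun ω => Y ω w) inferInstance
  have hYv : ∀ k, Measurable[M] fun ω => Y ω (v k) := fun k =>
    measurable_iff_comap_le.mpr (le_biSup (fun w => MeasurableSpace.comap (Y · w) _) (hvDS k).1)
  exact measurable_iff_comap_le.mp <| @measurable_of_tendsto_metrizable Ω E M _ _ _ _ _ _ hYv
    (tendsto_pi_nhds.mpr fun ω => (hY ω).tendsto.comp hvu')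

end GeneratedSigmaAlgebra

lemma mem_closure_inter_Ici_of_Ioo_subset_closure {α : Type*} [TopologicalSpace α]
    [LinearOrder α] [OrderTopology α] [DenselyOrdered α] {D : Set α} {u b : α} (hub : u < b)
    (h : Ioo u b ⊆ closure D) : u ∈ closure (D ∩ Ici u) := by
  have hu : u ∈ closure (Ioo u b) := by rw [closure_Ioo hub.ne]; exact left_mem_Icc.mpr hub.le
  have hIoo : closure (Ioo u b) ⊆ closure (Ioo u b ∩ D) := by
    simpa only [inter_eq_left.mpr h, closure_closure] using
      closure_mono ((isOpen_Ioo (a := u) (b := b)).inter_closure (t := D))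
  exact closure_mono (t := D ∩ Ici u) (fun x hx => ⟨hx.2, hx.1.1.le⟩) (hIoo hu)

lemma mem_closure_iUnion_image_Ico_inter_Ici {τ : ℕ → ℝ → ℝ}
    (hdense : ∀ u, 0 ≤ u → closure (⋃ n, τ n '' Icc 0 u) = Icc 0 u) {t u : ℝ}
    (hu : u ∈ Ico 0 t) : u ∈ closure ((⋃ n, τ n '' Ico 0 t) ∩ Ici u) := by
  have hub : u < (u + t) / 2 := by linarith [hu.2]
  have hbt : (u + t) / 2 < t := by linarith [hu.2]
  refine mem_closure_inter_Ici_of_Ioo_subset_closure hub fun v hv => ?_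
  have hv' : v ∈ closure (⋃ n, τ n '' Icc 0 ((u + t) / 2)) := by
    rw [hdense _ (hu.1.trans hub.le)]
    exact ⟨hu.1.trans hv.1.le, hv.2.le⟩
  exact closure_mono (iUnion_mono fun n => image_mono (Icc_subset_Ico_right hbt)) hv'

theorem delayed_information_increases_to_full_general
    {Ω : Type*} [MeasurableSpace Ω] {m : ℕ}
    (X : Fin m → Ω → ℝ → ℝ)
    (hrc : ∀ i ω u, 0 ≤ u → ContinuousWithinAt (X i ω) (Ici u) u)
    (τ : ℕ → Fin m → ℝ → ℝ)
    (hpos : ∀ n i s, 0 ≤ s → 0 ≤ τ n i s)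
    (hle : ∀ n i s, 0 ≤ s → τ n i s ≤ s)
    (href : ∀ n i u, 0 ≤ u → τ n i '' Icc 0 u ⊆ τ (n + 1) i '' Icc 0 u)
    (hdense : ∀ i u, 0 ≤ u → closure (⋃ n, τ n i '' Icc 0 u) = Icc 0 u)
    (t : ℝ) :
    Monotone (fun n => ⨆ i : Fin m, ⨆ s ∈ Ico (0 : ℝ) t,
        MeasurableSpace.comap (fun ω => X i ω (τ n i s)) inferInstance) ∧
    (∀ n, (⨆ i : Fin m, ⨆ s ∈ Ico (0 : ℝ) t,
        MeasurableSpace.comap (fun ω => X i ω (τ n i s)) inferInstance) ≤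
      ⨆ i : Fin m, ⨆ u ∈ Ico (0 : ℝ) t,
        MeasurableSpace.comap (fun ω => X i ω u) inferInstance) ∧
    (⨆ n : ℕ, ⨆ i : Fin m, ⨆ s ∈ Ico (0 : ℝ) t,
        MeasurableSpace.comap (fun ω => X i ω (τ n i s)) inferInstance) =
      ⨆ i : Fin m, ⨆ u ∈ Ico (0 : ℝ) t,
        MeasurableSpace.comap (fun ω => X i ω u) inferInstance := by
  have hsub : ∀ n i, τ n i '' Ico 0 t ⊆ id '' Ico 0 t := by
    rintro n i _ ⟨s, hs, rfl⟩
    simpa using ⟨hpos n i s hs.1, (hle n i s hs.1).trans_lt hs.2⟩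
  have hstep : ∀ n i, τ n i '' Ico 0 t ⊆ τ (n + 1) i '' Ico 0 t := by
    rintro n i _ ⟨s, hs, rfl⟩
    exact image_mono (Icc_subset_Ico_right hs.2) (href n i s hs.1 ⟨s, ⟨hs.1, le_rfl⟩, rfl⟩)
  have hG_le := fun n => iSup_biSup_comap_le_of_image_subset X (g₂ := fun _ => id) (hsub n)
  refine ⟨monotone_nat_of_le_succ fun n => iSup_biSup_comap_le_of_image_subset X (hstep n),
    hG_le, le_antisymm (iSup_le hG_le) (iSup_le fun i => iSup₂_le fun u hu => ?_)⟩
  calc MeasurableSpace.comap (fun ω => X i ω u) inferInstance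
      ≤ ⨆ v ∈ ⋃ n, τ n i '' Ico 0 t,
          MeasurableSpace.comap (fun ω => X i ω v) inferInstance :=
        comap_le_biSup_comap_of_continuousWithinAt
          (mem_closure_iUnion_image_Ico_inter_Ici (hdense i) hu) fun ω => hrc i ω u hu.1
    _ = ⨆ n, ⨆ s ∈ Ico 0 t,
          MeasurableSpace.comap (fun ω => X i ω (τ n i s)) inferInstance := by
        simp only [iSup_iUnion, iSup_image]
    _ ≤ _ := iSup_mono fun n => le_iSup_of_le i le_rfl

/-- Proposition 3.1(c). For a tuple of right-continuous processes and a
refining sequence of delays increasing to identity, the σ-algebras generated by the delayed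
observations before time `t` form a nondecreasing sequence, each contained in the σ-algebra
generated by the undelayed observations before `t`, and their supremum equals the latter. -/
theorem delayed_information_increases_to_full
    {Ω : Type*} [MeasurableSpace Ω] {m : ℕ} (hm : 1 ≤ m)
    (X : Fin m → Ω → ℝ → ℝ)
    (hmeas : ∀ i u, 0 ≤ u → Measurable fun ω => X i ω u)
    (hrc : ∀ i ω u, 0 ≤ u → ContinuousWithinAt (X i ω) (Ici u) u)
    (τ : ℕ → Fin m → ℝ → ℝ)
    (hpos : ∀ n i s, 0 ≤ s → 0 ≤ τ n i s)
    (hmono : ∀ n i, ∀ s u, 0 ≤ s → s ≤ u → τ n i s ≤ τ n i u)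
    (hrcτ : ∀ n i s, 0 ≤ s → ContinuousWithinAt (τ n i) (Ici s) s)
    (hle : ∀ n i s, 0 ≤ s → τ n i s ≤ s)
    (href : ∀ n i u, 0 ≤ u → τ n i '' Icc 0 u ⊆ τ (n + 1) i '' Icc 0 u)
    (hdense : ∀ i u, 0 ≤ u → closure (⋃ n, τ n i '' Icc 0 u) = Icc 0 u)
    (t : ℝ) (ht : 0 < t) :
    Monotone (fun n => ⨆ i : Fin m, ⨆ s ∈ Ico (0 : ℝ) t,
        MeasurableSpace.comap (fun ω => X i ω (τ n i s)) inferInstance) ∧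
    (∀ n, (⨆ i : Fin m, ⨆ s ∈ Ico (0 : ℝ) t,
        MeasurableSpace.comap (fun ω => X i ω (τ n i s)) inferInstance) ≤
      ⨆ i : Fin m, ⨆ u ∈ Ico (0 : ℝ) t,
        MeasurableSpace.comap (fun ω => X i ω u) inferInstance) ∧
    (⨆ n : ℕ, ⨆ i : Fin m, ⨆ s ∈ Ico (0 : ℝ) t,
        MeasurableSpace.comap (fun ω => X i ω (τ n i s)) inferInstance) =
      ⨆ i : Fin m, ⨆ u ∈ Ico (0 : ℝ) t,
        MeasurableSpace.comap (fun ω => X i ω u) inferInstance :=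
  delayed_information_increases_to_full_general X hrc τ hpos hle href hdense t
end

section
/- Let G be an additive commutative group, m ≥ 1, and U : [0,∞)^m → G any function. Let 0 = s_0 < s_1 < s_2 < ⋯ be an unbounded partition of [0,∞). For i ∈ {1,…,m} and t ≥ 0 define D_i(t) = Σ_{l≥0} [ U(v^{l,i}(t)) − U(w^{l,i}(t)) ], where v^{l,i}(t) has coordinates s_{l+1}∧t in positions 1,…,i and s_l∧t in positions i+1,…,m, and w^{l,i}(t) has coordinates s_{l+1}∧t in positions 1,…,i−1 and s_l∧t in positions i,…,m. Then each of these sums has only finitely many nonzero terms (every term with s_l ≥ t vanishes), and for every t ≥ 0: Σ_{i=1}^m D_i(t) = U(t,…,t) − U(0,…,0). -/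
open Filter Topology Set

/-- The sequentially-updated time vector `v^{l,i}(t)`: coordinates `s_{l+1} ∧ t` in
positions `j ≤ i` and `s_l ∧ t` in positions `j > i`. -/
def suV {m : ℕ} (s : ℕ → ℝ) (l : ℕ) (i : Fin m) (t : ℝ) : Fin m → ℝ :=
  fun j => if j ≤ i then min (s (l + 1)) t else min (s l) t

/-- The time vector `w^{l,i}(t)`: coordinates `s_{l+1} ∧ t` in positions `j < i` and
`s_l ∧ t` in positions `j ≥ i`. -/
def suW {m : ℕ} (s : ℕ → ℝ) (l : ℕ) (i : Fin m) (t : ℝ) : Fin m → ℝ :=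
  fun j => if j < i then min (s (l + 1)) t else min (s l) t

/-!
Within the partition step `[s_l, s_{l+1}]` the points `w^{l,1}, v^{l,1} = w^{l,2}, …, v^{l,m}`
form a path from `(s_l ∧ t, …)` to `(s_{l+1} ∧ t, …)` updating one coordinate at a time, so the
sum over `i` telescopes to `U(s_{l+1} ∧ t, …) - U(s_l ∧ t, …)`. Once `s_l ≥ t` both ends are
`(t, …, t)`, so only finitely many steps contribute, and the sum over `l` telescopes as well.
-/

def prefixUpdate {α : Type*} {m : ℕ} (a b : α) (k : ℕ) : Fin m → α :=
  fun j => if (j : ℕ) < k then b else a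

theorem sum_sub_prefixUpdate {α G : Type*} [AddCommGroup G] {m : ℕ} (U : (Fin m → α) → G)
    (a b : α) :
    ∑ i : Fin m, (U (prefixUpdate a b (i + 1)) - U (prefixUpdate a b i)) =
      U (fun _ => b) - U (fun _ => a) := by
  have h_top : (prefixUpdate a b m : Fin m → α) = fun _ => b := by
    funext j; simp [prefixUpdate, j.isLt]
  have h_bot : (prefixUpdate a b 0 : Fin m → α) = fun _ => a := by
    funext j; simp [prefixUpdate]
  rw [Fin.sum_univ_eq_sum_range (fun k => U (prefixUpdate a b (k + 1)) - U (prefixUpdate a b k)),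
    Finset.sum_range_sub (fun k => U (prefixUpdate a b k)), h_top, h_bot]

theorem suV_eq_prefixUpdate {m : ℕ} (s : ℕ → ℝ) (l : ℕ) (i : Fin m) (t : ℝ) :
    suV s l i t = prefixUpdate (min (s l) t) (min (s (l + 1)) t) (i + 1) := by
  funext j; simp only [suV, prefixUpdate, Nat.lt_succ_iff, Fin.le_def]

theorem suW_eq_prefixUpdate {m : ℕ} (s : ℕ → ℝ) (l : ℕ) (i : Fin m) (t : ℝ) :
    suW s l i t = prefixUpdate (min (s l) t) (min (s (l + 1)) t) i := by
  funext j; simp only [suW, prefixUpdate, Fin.lt_def]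

theorem sum_su_terms {G : Type*} [AddCommGroup G] {m : ℕ} (U : (Fin m → ℝ) → G)
    (s : ℕ → ℝ) (l : ℕ) (t : ℝ) :
    ∑ i : Fin m, (U (suV s l i t) - U (suW s l i t)) =
      U (fun _ => min (s (l + 1)) t) - U (fun _ => min (s l) t) := by
  simp only [suV_eq_prefixUpdate, suW_eq_prefixUpdate]
  exact sum_sub_prefixUpdate U _ _

theorem su_term_eq_zero_of_le {G : Type*} [AddCommGroup G] {m : ℕ} (U : (Fin m → ℝ) → G)
    {s : ℕ → ℝ} (hs : Monotone s) {l : ℕ} (i : Fin m) {t : ℝ} (hl : t ≤ s l) :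
    U (suV s l i t) - U (suW s l i t) = 0 := by
  have h_cur : min (s l) t = t := min_eq_right hl
  have h_next : min (s (l + 1)) t = t := min_eq_right (hl.trans (hs l.le_succ))
  rw [suV_eq_prefixUpdate, suW_eq_prefixUpdate, h_cur, h_next]
  have h_const (k : ℕ) : (prefixUpdate t t k : Fin m → ℝ) = fun _ => t := by
    funext j; simp [prefixUpdate]
  rw [h_const, h_const, sub_self]

theorem finsum_su_terms_eq_sum_range {G : Type*} [AddCommGroup G] {m : ℕ}
    (U : (Fin m → ℝ) → G) {s : ℕ → ℝ} (hs : Monotone s) (i : Fin m) {t : ℝ} {L : ℕ}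
    (hL : t ≤ s L) :
    ∑ᶠ l : ℕ, (U (suV s l i t) - U (suW s l i t)) =
      ∑ l ∈ Finset.range L, (U (suV s l i t) - U (suW s l i t)) := by
  refine finsum_eq_finsetSum_of_support_subset _ fun l hl => ?_
  rw [Finset.coe_range, Set.mem_Iio]
  by_contra! hLl
  exact hl (su_term_eq_zero_of_le U hs i (hL.trans (hs hLl)))

theorem su_decomposition_additive_general
    {G : Type*} [AddCommGroup G] {m : ℕ}
    (U : (Fin m → ℝ) → G)
    (s : ℕ → ℝ) (hs0 : s 0 = 0) (hsmono : StrictMono s)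
    (hsunbdd : Tendsto s atTop atTop)
    (t : ℝ) (ht : 0 ≤ t) :
    (∀ (i : Fin m) (l : ℕ), t ≤ s l → U (suV s l i t) - U (suW s l i t) = 0) ∧
    ∑ i : Fin m, ∑ᶠ l : ℕ, (U (suV s l i t) - U (suW s l i t)) =
      U (fun _ => t) - U (fun _ => 0) := by
  refine ⟨fun i l hl => su_term_eq_zero_of_le U hsmono.monotone i hl, ?_⟩
  obtain ⟨L, hL⟩ := (hsunbdd.eventually_ge_atTop t).exists
  calc ∑ i : Fin m, ∑ᶠ l : ℕ, (U (suV s l i t) - U (suW s l i t))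
      = ∑ l ∈ Finset.range L, ∑ i : Fin m, (U (suV s l i t) - U (suW s l i t)) := by
        simp only [finsum_su_terms_eq_sum_range U hsmono.monotone _ hL]
        exact Finset.sum_comm
    _ = U (fun _ => min (s L) t) - U (fun _ => min (s 0) t) := by
        simp only [sum_su_terms]
        exact Finset.sum_range_sub (fun l => U (fun _ => min (s l) t)) L
    _ = U (fun _ => t) - U (fun _ => 0) := by
        rw [min_eq_right hL, hs0, min_eq_left ht]

/-- additivity of the SU decomposition, Proposition 4.1. For any function
`U` on `[0,∞)^m` with values in an additive commutative group and any unbounded partition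
`0 = s_0 < s_1 < ⋯`, every SU term with `s_l ≥ t` vanishes, and the SU components sum up to
the total increment `U(t,…,t) - U(0,…,0)`. -/
theorem su_decomposition_additive
    {G : Type*} [AddCommGroup G] {m : ℕ} (hm : 1 ≤ m)
    (U : (Fin m → ℝ) → G)
    (s : ℕ → ℝ) (hs0 : s 0 = 0) (hsmono : StrictMono s)
    (hsunbdd : Tendsto s atTop atTop)
    (t : ℝ) (ht : 0 ≤ t) :
    (∀ (i : Fin m) (l : ℕ), t ≤ s l → U (suV s l i t) - U (suW s l i t) = 0) ∧
    ∑ i : Fin m, ∑ᶠ l : ℕ, (U (suV s l i t) - U (suW s l i t)) =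
      U (fun _ => t) - U (fun _ => 0) :=
  su_decomposition_additive_general U s hs0 hsmono hsunbdd t ht
end

section
/- Let m ≥ 1, let E_1,…,E_m be nonempty sets, let Y = (Y_1,…,Y_m) with Y_i : [0,∞) → E_i arbitrary functions, and let ρ be any function from m-tuples of such paths into an additive commutative group G. For r ≥ 0 let Y_i^r denote the stopped path Y_i^r(u) = Y_i(u) for u ≤ r and Y_i^r(u) = Y_i(r) for u > r, and set U(t_1,…,t_m) = ρ(Y_1^{t_1},…,Y_m^{t_m}). Let 0 = s_0 < s_1 < ⋯ be an unbounded partition and let D_i(t) = Σ_{l≥0} [U(v^{l,i}(t)) − U(w^{l,i}(t))] be the i-th SU component, where v^{l,i}(t) has coordinates s_{l+1}∧t in positions 1,…,i and s_l∧t in positions i+1,…,m, and w^{l,i}(t) agrees with v^{l,i}(t) except that its i-th coordinate is s_l∧t. Suppose 0 ≤ a < b, Y_i is constant on the closed interval [a,b], and a is a point of the partition (a = s_k for some k, or a = 0). Then D_i is constant on [a,b]: D_i(t) = D_i(a) for all t ∈ [a,b]. -/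
open Filter Topology Set

/-- The stopped path `Y^r`: `Y^r(u) = Y(u)` for `u ≤ r` and `Y^r(u) = Y(r)` for `u > r`. -/
noncomputable def stoppedPath {E : Type*} (Y : ℝ → E) (r : ℝ) : ℝ → E :=
  fun u => if u ≤ r then Y u else Y r

/-!
Split the SU sum at the partition point `a = s k`. A block `l < k` ends before `a`, so its
time vectors no longer depend on `t ≥ a`. In a block `l ≥ k` the vectors `v^{l,i}(t)` and
`w^{l,i}(t)` differ only in coordinate `i`, where both lie in `[a, b]`; as `Y i` is constant
there, the two stopped paths coincide and the summand vanishes for every `t ∈ [a, b]`.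
-/

lemma stoppedPath_eq_of_const_on_Icc {E : Type*} (Y : ℝ → E) {a b r r' : ℝ}
    (hconst : ∀ u ∈ Icc a b, ∀ v ∈ Icc a b, Y u = Y v)
    (hr : r ∈ Icc a b) (hr' : r' ∈ Icc a b) :
    stoppedPath Y r = stoppedPath Y r' := by
  funext u
  unfold stoppedPath
  split_ifs with hur hur' hur'
  · rfl
  · exact hconst u ⟨hr'.1.trans (not_le.1 hur').le, hur.trans hr.2⟩ r' hr'
  · exact hconst r hr u ⟨hr.1.trans (not_le.1 hur).le, hur'.trans hr'.2⟩
  · exact hconst r hr r' hr'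

section SUVectors

variable {m : ℕ} (s : ℕ → ℝ) (l : ℕ) (i : Fin m) (t : ℝ)

@[simp] lemma suV_self : suV s l i t i = min (s (l + 1)) t := by simp [suV]

@[simp] lemma suW_self : suW s l i t i = min (s l) t := by simp [suW]

lemma suV_eq_suW_of_ne {j : Fin m} (hj : j ≠ i) : suV s l i t j = suW s l i t j := by
  simp only [suV, suW, lt_iff_le_and_ne, ne_eq, hj, not_false_eq_true, and_true]

variable {s l t}

lemma suV_of_le (hs : s l ≤ s (l + 1)) (ht : s (l + 1) ≤ t) :
    suV s l i t = fun j => if j ≤ i then s (l + 1) else s l := by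
  unfold suV
  rw [min_eq_left ht, min_eq_left (hs.trans ht)]

lemma suW_of_le (hs : s l ≤ s (l + 1)) (ht : s (l + 1) ≤ t) :
    suW s l i t = fun j => if j < i then s (l + 1) else s l := by
  unfold suW
  rw [min_eq_left ht, min_eq_left (hs.trans ht)]

end SUVectors

lemma stoppedPath_suV_eq_suW {m : ℕ} {E : Fin m → Type*} (Y : (i : Fin m) → ℝ → E i)
    {s : ℕ → ℝ} {l : ℕ} {i : Fin m} {a b t : ℝ}
    (hconst : ∀ u ∈ Icc a b, ∀ v ∈ Icc a b, Y i u = Y i v)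
    (hs : s l ≤ s (l + 1)) (hal : a ≤ s l) (ht : t ∈ Icc a b) :
    (fun j => stoppedPath (Y j) (suV s l i t j)) =
      fun j => stoppedPath (Y j) (suW s l i t j) := by
  funext j
  rcases eq_or_ne j i with rfl | hj
  · rw [suV_self, suW_self]
    exact stoppedPath_eq_of_const_on_Icc (Y j) hconst
      ⟨le_min (hal.trans hs) ht.1, (min_le_right _ _).trans ht.2⟩
      ⟨le_min hal ht.1, (min_le_right _ _).trans ht.2⟩
  · rw [suV_eq_suW_of_ne s l i t hj]

theorem su_decomposition_normalized_general
    {G : Type*} [AddCommGroup G] {m : ℕ}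
    {E : Fin m → Type*}
    (Y : (i : Fin m) → ℝ → E i)
    (ρ : ((i : Fin m) → ℝ → E i) → G)
    (s : ℕ → ℝ) (hs0 : s 0 = 0) (hsmono : StrictMono s)
    (i : Fin m) (a b : ℝ)
    (hconst : ∀ u ∈ Icc a b, ∀ v ∈ Icc a b, Y i u = Y i v)
    (hpart : a = 0 ∨ ∃ k, s k = a) :
    ∀ t ∈ Icc a b,
      (∑ᶠ l : ℕ, (ρ (fun j => stoppedPath (Y j) (suV s l i t j)) -
          ρ (fun j => stoppedPath (Y j) (suW s l i t j)))) =
      ∑ᶠ l : ℕ, (ρ (fun j => stoppedPath (Y j) (suV s l i a j)) -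
          ρ (fun j => stoppedPath (Y j) (suW s l i a j))) := by
  obtain ⟨k, rfl⟩ : ∃ k, s k = a := hpart.elim (fun h => ⟨0, hs0.trans h.symm⟩) id
  intro t ht
  have hak : s k ∈ Icc (s k) b := ⟨le_rfl, ht.1.trans ht.2⟩
  refine finsum_congr fun l => ?_
  have hs : s l ≤ s (l + 1) := hsmono.monotone l.le_succ
  rcases lt_or_ge l k with hlk | hkl
  · have hlk' : s (l + 1) ≤ s k := hsmono.monotone hlk
    rw [suV_of_le i hs (hlk'.trans ht.1), suW_of_le i hs (hlk'.trans ht.1),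
      suV_of_le i hs hlk', suW_of_le i hs hlk']
  · have hkl' : s k ≤ s l := hsmono.monotone hkl
    rw [stoppedPath_suV_eq_suW Y hconst hs hkl' ht, stoppedPath_suV_eq_suW Y hconst hs hkl' hak,
      sub_self, sub_self]

/-- normalization of the SU decomposition, Proposition 4.1. If `Y i` is
constant on `[a,b]` and `a` is a partition point (or `a = 0`), then the `i`-th SU component
`D_i(t) = Σ_l [U(v^{l,i}(t)) - U(w^{l,i}(t))]` of `t ↦ ρ(Y^t)` is constant on `[a,b]`. -/
theorem su_decomposition_normalized
    {G : Type*} [AddCommGroup G] {m : ℕ} (hm : 1 ≤ m)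
    {E : Fin m → Type*} (hE : ∀ i, Nonempty (E i))
    (Y : (i : Fin m) → ℝ → E i)
    (ρ : ((i : Fin m) → ℝ → E i) → G)
    (s : ℕ → ℝ) (hs0 : s 0 = 0) (hsmono : StrictMono s)
    (hsunbdd : Tendsto s atTop atTop)
    (i : Fin m) (a b : ℝ) (ha : 0 ≤ a) (hab : a < b)
    (hconst : ∀ u ∈ Icc a b, ∀ v ∈ Icc a b, Y i u = Y i v)
    (hpart : a = 0 ∨ ∃ k, s k = a) :
    ∀ t ∈ Icc a b,
      (∑ᶠ l : ℕ, (ρ (fun j => stoppedPath (Y j) (suV s l i t j)) -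
          ρ (fun j => stoppedPath (Y j) (suW s l i t j)))) =
      ∑ᶠ l : ℕ, (ρ (fun j => stoppedPath (Y j) (suV s l i a j)) -
          ρ (fun j => stoppedPath (Y j) (suW s l i a j))) :=
  su_decomposition_normalized_general Y ρ s hs0 hsmono i a b hconst hpart
end

section
/- Let m ≥ 1, let E_1,…,E_m be nonempty sets, Y = (Y_1,…,Y_m) with Y_i : [0,∞) → E_i, and ρ a function from m-tuples of such paths to ℝ. Write Y^t for the componentwise stopped tuple at time t. Suppose there is an unbounded partition 0 = u_0 < u_1 < u_2 < ⋯ of [0,∞) such that on each interval (u_l, u_{l+1}] at most one of the components Y_1,…,Y_m is non-constant. Let D = (D_1,…,D_m) and D̃ = (D̃_1,…,D̃_m) be tuples of right-continuous functions [0,∞) → ℝ with D_i(0) = D̃_i(0) = 0, and assume both are additive (Σ_i D_i(t) = ρ(Y^t) − ρ(Y^0) = Σ_i D̃_i(t) for all t ≥ 0) and normalized (if Y_i is constant on an interval (a,b], then D_i, respectively D̃_i, is constant on (a,b]). Then D_i(t) = D̃_i(t) for all i and all t ≥ 0. -/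
/-!
Pass to the difference `F = D - D'`: it is right-continuous, vanishes at `0`, sums to zero over
the components, and on each partition interval every component except the active one is
constant. Induct over the partition: if `F` vanishes at `u l`, right-continuity turns each
constant component into the zero function on `(u l, u (l + 1)]`, and the zero sum then kills the
remaining component as well.
-/

open Filter Topology Set

def IsPhased {ι : Type*} {E : ι → Type*} (Y : (i : ι) → ℝ → E i) (u : ℕ → ℝ) :
    Prop :=
  ∀ l, ∃ i₀, ∀ j ≠ i₀,
    ∀ x ∈ Ioc (u l) (u (l + 1)), ∀ y ∈ Ioc (u l) (u (l + 1)), Y j x = Y j y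

theorem ContinuousWithinAt.eq_of_forall_Ioc_eq
    {α β : Type*} [LinearOrder α] [TopologicalSpace α] [OrderTopology α] [DenselyOrdered α]
    [TopologicalSpace β] [T2Space β] {f : α → β} {a b : α} {c : β}
    (hf : ContinuousWithinAt f (Ici a) a) (hab : a < b) (hc : ∀ x ∈ Ioc a b, f x = c) :
    f a = c :=
  have : (𝓝[>] a).NeBot := nhdsGT_neBot_of_exists_gt ⟨b, hab⟩
  tendsto_nhds_unique (hf.mono Ioi_subset_Ici_self)
    (tendsto_const_nhds.congr' <|
      eventuallyEq_of_mem (Ioc_mem_nhdsGT hab) fun x hx => (hc x hx).symm)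

theorem IsPhased.of_forall_const_imp {ι : Type*} {E : ι → Type*} {E' : ι → Type*}
    {Y : (i : ι) → ℝ → E i} {F : (i : ι) → ℝ → E' i} {u : ℕ → ℝ}
    (hY : IsPhased Y u)
    (hF : ∀ i l,
      (∀ x ∈ Ioc (u l) (u (l + 1)), ∀ y ∈ Ioc (u l) (u (l + 1)), Y i x = Y i y) →
        ∀ x ∈ Ioc (u l) (u (l + 1)), ∀ y ∈ Ioc (u l) (u (l + 1)), F i x = F i y) :
    IsPhased F u := fun l =>
  (hY l).imp fun _ hi₀ j hj => hF j l (hi₀ j hj)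

section ZeroSum

variable {ι : Type*} [Fintype ι] {F : ι → ℝ → ℝ}

theorem eq_zero_on_Ioc_of_sum_eq_zero {a b : ℝ} (hab : a < b)
    (hsum : ∀ t ∈ Ioc a b, ∑ i, F i t = 0) (hrc : ∀ i, ContinuousWithinAt (F i) (Ici a) a)
    (ha : ∀ i, F i a = 0) {i₀ : ι}
    (hconst : ∀ j ≠ i₀, ∀ x ∈ Ioc a b, ∀ y ∈ Ioc a b, F j x = F j y) :
    ∀ i, ∀ t ∈ Ioc a b, F i t = 0 := by
  have h_passive : ∀ j ≠ i₀, ∀ t ∈ Ioc a b, F j t = 0 := fun j hj t ht =>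
    ((hrc j).eq_of_forall_Ioc_eq hab fun x hx => hconst j hj x hx t ht) ▸ ha j
  intro i t ht
  by_cases hi : i = i₀
  · subst hi
    simpa only [Fintype.sum_eq_single i fun j hj => h_passive j hj t ht] using hsum t ht
  · exact h_passive i hi t ht

theorem eq_zero_of_isPhased_of_sum_eq_zero {u : ℕ → ℝ} (hu : StrictMono u)
    (hu_top : Tendsto u atTop atTop) (hF : IsPhased F u)
    (hsum : ∀ t, u 0 ≤ t → ∑ i, F i t = 0)
    (hrc : ∀ i t, u 0 ≤ t → ContinuousWithinAt (F i) (Ici t) t) (h0 : ∀ i, F i (u 0) = 0) :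
    ∀ i t, u 0 ≤ t → F i t = 0 := by
  have hu0 : ∀ l, u 0 ≤ u l := fun l => hu.monotone l.zero_le
  have h_upto : ∀ l i t, u 0 ≤ t → t ≤ u l → F i t = 0 := by
    intro l
    induction l with
    | zero => exact fun i t ht ht' => le_antisymm ht' ht ▸ h0 i
    | succ l ih =>
      intro i t ht ht'
      rcases le_or_gt t (u l) with htl | htl
      · exact ih i t ht htl
      obtain ⟨i₀, hi₀⟩ := hF l
      exact eq_zero_on_Ioc_of_sum_eq_zero (hu l.lt_succ_self)
        (fun s hs => hsum s ((hu0 l).trans hs.1.le)) (fun j => hrc j _ (hu0 l))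
        (fun j => ih j _ (hu0 l) le_rfl) hi₀ i t ⟨htl, ht'⟩
  intro i t ht
  obtain ⟨l, hl⟩ := (hu_top.eventually_ge_atTop t).exists
  exact h_upto l i t ht hl

end ZeroSum

theorem additive_normalized_decomposition_unique_for_phased_general
    {m : ℕ} {E : Fin m → Type*}
    (Y : (i : Fin m) → ℝ → E i)
    (ρ : ((i : Fin m) → ℝ → E i) → ℝ)
    (u : ℕ → ℝ) (hu0 : u 0 = 0) (humono : StrictMono u)
    (huunbdd : Tendsto u atTop atTop)
    (hphased : ∀ l, ∃ i₀ : Fin m, ∀ j ≠ i₀,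
      ∀ x ∈ Ioc (u l) (u (l + 1)), ∀ y ∈ Ioc (u l) (u (l + 1)), Y j x = Y j y)
    (D D' : Fin m → ℝ → ℝ)
    (hDrc : ∀ i t, 0 ≤ t → ContinuousWithinAt (D i) (Ici t) t)
    (hD'rc : ∀ i t, 0 ≤ t → ContinuousWithinAt (D' i) (Ici t) t)
    (hD0 : ∀ i, D i 0 = 0) (hD'0 : ∀ i, D' i 0 = 0)
    (hDadd : ∀ t, 0 ≤ t →
      ∑ i : Fin m, D i t =
        ρ (fun i => stoppedPath (Y i) t) - ρ (fun i => stoppedPath (Y i) 0))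
    (hD'add : ∀ t, 0 ≤ t →
      ∑ i : Fin m, D' i t =
        ρ (fun i => stoppedPath (Y i) t) - ρ (fun i => stoppedPath (Y i) 0))
    (hDnorm : ∀ (i : Fin m) (a b : ℝ), 0 ≤ a → a < b →
      (∀ x ∈ Ioc a b, ∀ y ∈ Ioc a b, Y i x = Y i y) →
      ∀ x ∈ Ioc a b, ∀ y ∈ Ioc a b, D i x = D i y)
    (hD'norm : ∀ (i : Fin m) (a b : ℝ), 0 ≤ a → a < b →
      (∀ x ∈ Ioc a b, ∀ y ∈ Ioc a b, Y i x = Y i y) →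
      ∀ x ∈ Ioc a b, ∀ y ∈ Ioc a b, D' i x = D' i y) :
    ∀ (i : Fin m) (t : ℝ), 0 ≤ t → D i t = D' i t := by
  have hu_nonneg : ∀ l, 0 ≤ u l := fun l => hu0 ▸ humono.monotone l.zero_le
  have h_phased : IsPhased (fun i t => D i t - D' i t) u :=
    IsPhased.of_forall_const_imp (Y := Y) hphased fun i l hY x hx y hy => by
      have hlt := humono l.lt_succ_self
      rw [hDnorm i _ _ (hu_nonneg l) hlt hY x hx y hy,
        hD'norm i _ _ (hu_nonneg l) hlt hY x hx y hy]
  have h_diff := eq_zero_of_isPhased_of_sum_eq_zero humono huunbdd h_phased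
    (fun t ht => by
      rw [Finset.sum_sub_distrib, hDadd t (hu0 ▸ ht), hD'add t (hu0 ▸ ht), sub_self])
    (fun i t ht => (hDrc i t (hu0 ▸ ht)).sub (hD'rc i t (hu0 ▸ ht)))
    (fun i => by rw [hu0, hD0, hD'0, sub_self])
  exact fun i t ht => sub_eq_zero.mp (h_diff i t (hu0 ▸ ht))

/-- deterministic uniqueness, core of Proposition 4.3 / Theorem 5.1.
For phased data (on each partition interval at most one component of `Y` is non-constant),
any two additive, normalized tuples of right-continuous functions starting at `0`
decomposing `t ↦ ρ(Y^t)` coincide. -/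
theorem additive_normalized_decomposition_unique_for_phased
    {m : ℕ} (hm : 1 ≤ m) {E : Fin m → Type*} (hE : ∀ i, Nonempty (E i))
    (Y : (i : Fin m) → ℝ → E i)
    (ρ : ((i : Fin m) → ℝ → E i) → ℝ)
    (u : ℕ → ℝ) (hu0 : u 0 = 0) (humono : StrictMono u)
    (huunbdd : Tendsto u atTop atTop)
    (hphased : ∀ l, ∃ i₀ : Fin m, ∀ j ≠ i₀,
      ∀ x ∈ Ioc (u l) (u (l + 1)), ∀ y ∈ Ioc (u l) (u (l + 1)), Y j x = Y j y)
    (D D' : Fin m → ℝ → ℝ)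
    (hDrc : ∀ i t, 0 ≤ t → ContinuousWithinAt (D i) (Ici t) t)
    (hD'rc : ∀ i t, 0 ≤ t → ContinuousWithinAt (D' i) (Ici t) t)
    (hD0 : ∀ i, D i 0 = 0) (hD'0 : ∀ i, D' i 0 = 0)
    (hDadd : ∀ t, 0 ≤ t →
      ∑ i : Fin m, D i t =
        ρ (fun i => stoppedPath (Y i) t) - ρ (fun i => stoppedPath (Y i) 0))
    (hD'add : ∀ t, 0 ≤ t →
      ∑ i : Fin m, D' i t =
        ρ (fun i => stoppedPath (Y i) t) - ρ (fun i => stoppedPath (Y i) 0))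
    (hDnorm : ∀ (i : Fin m) (a b : ℝ), 0 ≤ a → a < b →
      (∀ x ∈ Ioc a b, ∀ y ∈ Ioc a b, Y i x = Y i y) →
      ∀ x ∈ Ioc a b, ∀ y ∈ Ioc a b, D i x = D i y)
    (hD'norm : ∀ (i : Fin m) (a b : ℝ), 0 ≤ a → a < b →
      (∀ x ∈ Ioc a b, ∀ y ∈ Ioc a b, Y i x = Y i y) →
      ∀ x ∈ Ioc a b, ∀ y ∈ Ioc a b, D' i x = D' i y) :
    ∀ (i : Fin m) (t : ℝ), 0 ≤ t → D i t = D' i t :=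
  additive_normalized_decomposition_unique_for_phased_general Y ρ u hu0 humono huunbdd hphased D D'
    hDrc hD'rc hD0 hD'0 hDadd hD'add hDnorm hD'norm
end

section
/- Let m ≥ 1, let E_1,…,E_m be topological spaces, Y = (Y_1,…,Y_m) with Y_i : [0,∞) → E_i right-continuous, and ρ a function from m-tuples of such paths to ℝ. Suppose there is an unbounded partition 0 = u_0 < u_1 < ⋯ of [0,∞) such that on each (u_l, u_{l+1}] at most one component of Y is non-constant; for each i, let A_i be the set of indices l such that Y_i is non-constant on (u_l, u_{l+1}]. Let D = (D_1,…,D_m) be right-continuous functions [0,∞) → ℝ with D_i(0) = 0, additive (Σ_i D_i(t) = ρ(Y^t) − ρ(Y^0) for all t) and normalized (Y_i constant on (a,b] implies D_i constant on (a,b]). Then for every i and t ≥ 0: D_i(t) = Σ_{l ∈ A_i} [ ρ(Y^{u_{l+1}∧t}) − ρ(Y^{u_l∧t}) ]. -/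
/-!
On the `l`-th layer `[u l, u (l + 1)]` every component except possibly one active one has a
constant path, so by normalization (and right-continuity at the left end point) its `D`
does not move there; additivity then forces the increment of the active component's `D` to be
the increment of `t ↦ ρ(Y^t)`. Summing the layer increments of `D i` up to time `t`
telescopes to `D i t - D i 0 = D i t`.
-/

open Filter Topology Set

section RightContinuous

variable {α β : Type*} [TopologicalSpace α] [LinearOrder α] [OrderTopology α]
  [DenselyOrdered α] [TopologicalSpace β] [T1Space β]

theorem eq_of_continuousWithinAt_Ici_of_forall_Ioc {f : α → β} {a b : α} {c : β}
    (hab : a < b) (hf : ContinuousWithinAt f (Ici a) a) (hc : ∀ x ∈ Ioc a b, f x = c) :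
    f a = c := by
  have ha : a ∈ closure (Ioc a b) := by
    rw [closure_Ioc hab.ne]
    exact left_mem_Icc.mpr hab.le
  have hmem := (hf.mono fun _ hx => hx.1.le).mem_closure ha (t := {c}) hc
  rwa [closure_singleton, mem_singleton_iff] at hmem

theorem forall_Icc_eq_of_continuousWithinAt_Ici_of_forall_Ioc {f : α → β} {a b : α}
    (hab : a < b) (hf : ContinuousWithinAt f (Ici a) a)
    (hc : ∀ x ∈ Ioc a b, ∀ y ∈ Ioc a b, f x = f y) :
    ∀ x ∈ Icc a b, ∀ y ∈ Icc a b, f x = f y := by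
  have hb : b ∈ Ioc a b := right_mem_Ioc.mpr hab
  have hIoc : ∀ x ∈ Ioc a b, f x = f b := fun x hx => hc x hx b hb
  have hIcc : ∀ x ∈ Icc a b, f x = f b := by
    intro x hx
    rcases hx.1.eq_or_lt with rfl | hax
    · exact eq_of_continuousWithinAt_Ici_of_forall_Ioc hab hf hIoc
    · exact hIoc x ⟨hax, hx.2⟩
  intro x hx y hy
  rw [hIcc x hx, hIcc y hy]

end RightContinuous

section Layers

variable {M : Type*} [AddCommGroup M]

def layerIncrement (G : ℝ → M) (u : ℕ → ℝ) (t : ℝ) (l : ℕ) : M :=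
  G (min (u (l + 1)) t) - G (min (u l) t)

variable {G : ℝ → M} {u : ℕ → ℝ} {t : ℝ}

theorem layerIncrement_of_le (hu : Monotone u) {l : ℕ} (ht : t ≤ u l) :
    layerIncrement G u t l = 0 := by
  rw [layerIncrement, min_eq_right ht, min_eq_right (ht.trans (hu l.le_succ)), sub_self]

theorem sum_range_layerIncrement {N : ℕ} (ht : t ≤ u N) :
    ∑ l ∈ Finset.range N, layerIncrement G u t l = G t - G (min (u 0) t) :=
  (Finset.sum_range_sub (fun l => G (min (u l) t)) N).trans (by rw [min_eq_right ht])

theorem finsum_mem_layerIncrement (hu : Monotone u) {N : ℕ} (ht : t ≤ u N) (A : Set ℕ) :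
    ∑ᶠ l ∈ A, layerIncrement G u t l =
      ∑ l ∈ Finset.range N, A.indicator (layerIncrement G u t) l := by
  rw [finsum_mem_def]
  refine finsum_eq_sum_of_support_subset _ fun l hl => ?_
  rw [Finset.coe_range, mem_Iio]
  by_contra! hNl
  exact hl (indicator_apply_eq_zero.mpr fun _ => layerIncrement_of_le hu (ht.trans (hu hNl)))

theorem layerIncrement_eq_of_forall_ne {ι : Type*} [Fintype ι] {D : ι → ℝ → M}
    {F : ℝ → M} (hadd : ∀ s, 0 ≤ s → ∑ j, D j s = F s - F 0) {l : ℕ} (hl : 0 ≤ u l)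
    (hl' : 0 ≤ u (l + 1)) (ht : 0 ≤ t) (i : ι)
    (hothers : ∀ j ≠ i, layerIncrement (D j) u t l = 0) :
    layerIncrement (D i) u t l = layerIncrement F u t l := by
  have hsum : ∑ j, layerIncrement (D j) u t l = layerIncrement F u t l := by
    simp only [layerIncrement, Finset.sum_sub_distrib]
    rw [hadd _ (le_min hl' ht), hadd _ (le_min hl ht), sub_sub_sub_cancel_right]
  rwa [Finset.sum_eq_single i (fun j _ hj => hothers j hj) (by simp)] at hsum

variable [TopologicalSpace M] [T1Space M]

theorem layerIncrement_eq_zero_of_forall_Ioc (hu : Monotone u) {l : ℕ} (hl : u l < u (l + 1))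
    (hG : ContinuousWithinAt G (Ici (u l)) (u l))
    (hc : ∀ x ∈ Ioc (u l) (u (l + 1)), ∀ y ∈ Ioc (u l) (u (l + 1)), G x = G y) :
    layerIncrement G u t l = 0 := by
  rcases le_or_gt t (u l) with htl | hlt
  · exact layerIncrement_of_le hu htl
  · have hconst := forall_Icc_eq_of_continuousWithinAt_Ici_of_forall_Ioc hl hG hc
    rw [layerIncrement, min_eq_left hlt.le, sub_eq_zero]
    exact hconst _ ⟨le_min (hu l.le_succ) hlt.le, min_le_left _ _⟩ _ ⟨le_rfl, hu l.le_succ⟩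

end Layers

theorem eq_finsum_mem_layerIncrement_of_phased {ι M : Type*} [Fintype ι] [AddCommGroup M]
    [TopologicalSpace M] [T1Space M] {u : ℕ → ℝ} (hu0 : u 0 = 0) (hu : StrictMono u)
    (hutop : Tendsto u atTop atTop) {A : ι → Set ℕ} (hA : ∀ l, ∃ i₀, ∀ j ≠ i₀, l ∉ A j)
    {F : ℝ → M} {D : ι → ℝ → M}
    (hDrc : ∀ i t, 0 ≤ t → ContinuousWithinAt (D i) (Ici t) t) (hD0 : ∀ i, D i 0 = 0)
    (hDadd : ∀ t, 0 ≤ t → ∑ i, D i t = F t - F 0)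
    (hDnorm : ∀ i l, l ∉ A i →
      ∀ x ∈ Ioc (u l) (u (l + 1)), ∀ y ∈ Ioc (u l) (u (l + 1)), D i x = D i y)
    (i : ι) {t : ℝ} (ht : 0 ≤ t) :
    D i t = ∑ᶠ l ∈ A i, layerIncrement F u t l := by
  have hu_nonneg : ∀ l, 0 ≤ u l := fun l => hu0 ▸ hu.monotone l.zero_le
  have hidle : ∀ j l, l ∉ A j → layerIncrement (D j) u t l = 0 := fun j l hl =>
    layerIncrement_eq_zero_of_forall_Ioc hu.monotone (hu l.lt_succ_self)
      (hDrc j _ (hu_nonneg l)) (hDnorm j l hl)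
  have hlayer :
      ∀ l, layerIncrement (D i) u t l = (A i).indicator (layerIncrement F u t) l := by
    intro l
    by_cases hl : l ∈ A i
    · obtain ⟨i₀, hi₀⟩ := hA l
      obtain rfl : i = i₀ := by_contra fun hne => hi₀ i hne hl
      rw [indicator_of_mem hl]
      exact layerIncrement_eq_of_forall_ne hDadd (hu_nonneg l) (hu_nonneg (l + 1)) ht i
        fun j hj => hidle j l (hi₀ j hj)
    · rw [indicator_of_notMem hl, hidle i l hl]
  obtain ⟨N, hN⟩ := (hutop.eventually_ge_atTop t).exists
  calc D i t = D i t - D i (min (u 0) t) := by rw [hu0, min_eq_left ht, hD0, sub_zero]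
    _ = ∑ l ∈ Finset.range N, layerIncrement (D i) u t l :=
      (sum_range_layerIncrement hN).symm
    _ = ∑ᶠ l ∈ A i, layerIncrement F u t l := by
      rw [finsum_mem_layerIncrement hu.monotone hN]
      exact Finset.sum_congr rfl fun l _ => hlayer l

theorem additive_normalized_decomposition_telescopes_for_phased_general
    {m : ℕ} {E : Fin m → Type*}
    (Y : (i : Fin m) → ℝ → E i)
    (ρ : ((i : Fin m) → ℝ → E i) → ℝ)
    (u : ℕ → ℝ) (hu0 : u 0 = 0) (humono : StrictMono u)
    (huunbdd : Tendsto u atTop atTop)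
    (hphased : ∀ l, ∃ i₀ : Fin m, ∀ j ≠ i₀,
      ∀ x ∈ Ioc (u l) (u (l + 1)), ∀ y ∈ Ioc (u l) (u (l + 1)), Y j x = Y j y)
    (D : Fin m → ℝ → ℝ)
    (hDrc : ∀ i t, 0 ≤ t → ContinuousWithinAt (D i) (Ici t) t)
    (hD0 : ∀ i, D i 0 = 0)
    (hDadd : ∀ t, 0 ≤ t →
      ∑ i : Fin m, D i t =
        ρ (fun i => stoppedPath (Y i) t) - ρ (fun i => stoppedPath (Y i) 0))
    (hDnorm : ∀ (i : Fin m) (a b : ℝ), 0 ≤ a → a < b →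
      (∀ x ∈ Ioc a b, ∀ y ∈ Ioc a b, Y i x = Y i y) →
      ∀ x ∈ Ioc a b, ∀ y ∈ Ioc a b, D i x = D i y) :
    ∀ (i : Fin m) (t : ℝ), 0 ≤ t →
      D i t = ∑ᶠ l ∈ {l : ℕ | ¬ (∀ x ∈ Ioc (u l) (u (l + 1)),
            ∀ y ∈ Ioc (u l) (u (l + 1)), Y i x = Y i y)},
          (ρ (fun j => stoppedPath (Y j) (min (u (l + 1)) t)) -
            ρ (fun j => stoppedPath (Y j) (min (u l) t))) := by
  intro i t ht
  refine eq_finsum_mem_layerIncrement_of_phased hu0 humono huunbdd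
    (A := fun j => {l | ¬ ∀ x ∈ Ioc (u l) (u (l + 1)),
      ∀ y ∈ Ioc (u l) (u (l + 1)), Y j x = Y j y})
    (fun l => ?_) hDrc hD0 hDadd (fun j l hl => ?_) i ht
  · obtain ⟨i₀, hi₀⟩ := hphased l
    exact ⟨i₀, fun j hj hl => hl (hi₀ j hj)⟩
  · exact hDnorm j _ _ (hu0 ▸ humono.monotone l.zero_le) (humono l.lt_succ_self)
      (not_not.mp hl)

/-- explicit telescoping representation for phased data. For phased
right-continuous data, any additive normalized decomposition `D` of `t ↦ ρ(Y^t)` by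
right-continuous functions starting at `0` satisfies
`D_i(t) = Σ_{l ∈ A_i} [ρ(Y^{u_{l+1} ∧ t}) - ρ(Y^{u_l ∧ t})]`, where `A_i` is the set of
partition intervals on which `Y i` is non-constant. -/
theorem additive_normalized_decomposition_telescopes_for_phased
    {m : ℕ} (hm : 1 ≤ m) {E : Fin m → Type*} [∀ i, TopologicalSpace (E i)]
    (hE : ∀ i, Nonempty (E i))
    (Y : (i : Fin m) → ℝ → E i)
    (hYrc : ∀ i t, 0 ≤ t → ContinuousWithinAt (Y i) (Ici t) t)
    (ρ : ((i : Fin m) → ℝ → E i) → ℝ)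
    (u : ℕ → ℝ) (hu0 : u 0 = 0) (humono : StrictMono u)
    (huunbdd : Tendsto u atTop atTop)
    (hphased : ∀ l, ∃ i₀ : Fin m, ∀ j ≠ i₀,
      ∀ x ∈ Ioc (u l) (u (l + 1)), ∀ y ∈ Ioc (u l) (u (l + 1)), Y j x = Y j y)
    (D : Fin m → ℝ → ℝ)
    (hDrc : ∀ i t, 0 ≤ t → ContinuousWithinAt (D i) (Ici t) t)
    (hD0 : ∀ i, D i 0 = 0)
    (hDadd : ∀ t, 0 ≤ t →
      ∑ i : Fin m, D i t =
        ρ (fun i => stoppedPath (Y i) t) - ρ (fun i => stoppedPath (Y i) 0))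
    (hDnorm : ∀ (i : Fin m) (a b : ℝ), 0 ≤ a → a < b →
      (∀ x ∈ Ioc a b, ∀ y ∈ Ioc a b, Y i x = Y i y) →
      ∀ x ∈ Ioc a b, ∀ y ∈ Ioc a b, D i x = D i y) :
    ∀ (i : Fin m) (t : ℝ), 0 ≤ t →
      D i t = ∑ᶠ l ∈ {l : ℕ | ¬ (∀ x ∈ Ioc (u l) (u (l + 1)),
            ∀ y ∈ Ioc (u l) (u (l + 1)), Y i x = Y i y)},
          (ρ (fun j => stoppedPath (Y j) (min (u (l + 1)) t)) -
            ρ (fun j => stoppedPath (Y j) (min (u l) t))) :=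
  additive_normalized_decomposition_telescopes_for_phased_general Y ρ u hu0 humono huunbdd hphased D
    hDrc hD0 hDadd hDnorm
end
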